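/- Let 3/2 < p < ∞. There exists a constant C = C(p) > 0 such that for every u ∈ C_c^∞(ℝ³; ℝ³): ‖u‖_{L^{4p/(p−1),4}(ℝ³)}² ≤ C ‖u‖_{L⁴(ℝ³)}^{(2p−3)/p} ‖ |u| ∇|u| ‖_{L²(ℝ³)}^{3/(2p)}, where |u|(x) denotes the Euclidean norm of the vector u(x) and ∇|u| its gradient. -/

import Mathlib

open MeasureTheory Set
open scoped ENNReal BigOperators InnerProductSpace

noncomputable section

/-- Three-dimensional Euclidean space. -/
abbrev X3 : Type := EuclideanSpace ℝ (Fin 3)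

namespace Micropolar

/-- The `i`-th coordinate unit vector of `ℝ³`. -/
def e (i : Fin 3) : X3 := EuclideanSpace.single i 1

/-- The `i`-th partial derivative of a function on `ℝ³`. -/
def pd {E : Type*} [NormedAddCommGroup E] [NormedSpace ℝ E]
    (f : X3 → E) (i : Fin 3) (x : X3) : E :=
  fderiv ℝ f x (e i)

/-- The (componentwise) Laplacian. -/
def lap {E : Type*} [NormedAddCommGroup E] [NormedSpace ℝ E]
    (f : X3 → E) (x : X3) : E :=
  ∑ i : Fin 3, pd (fun y => pd f i y) i x

/-- The divergence of a vector field on `ℝ³`. -/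
def divg (v : X3 → X3) (x : X3) : ℝ := ∑ i : Fin 3, pd v i x i

/-- The gradient of a scalar function on `ℝ³`. -/
def grad (f : X3 → ℝ) (x : X3) : X3 := ∑ i : Fin 3, pd f i x • e i

/-- The curl `∇ × v` of a vector field on `ℝ³`. -/
def curl (v : X3 → X3) (x : X3) : X3 :=
  (pd v 1 x 2 - pd v 2 x 1) • e 0 + (pd v 2 x 0 - pd v 0 x 2) • e 1 +
    (pd v 0 x 1 - pd v 1 x 0) • e 2

/-- The convective derivative `(u · ∇) v`. -/
def conv {E : Type*} [NormedAddCommGroup E] [NormedSpace ℝ E]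
    (u : X3 → X3) (v : X3 → E) (x : X3) : E :=
  ∑ i : Fin 3, u x i • pd v i x

/-- Weak (distributional) divergence-free condition. -/
def DivFreeWeak (v : X3 → X3) : Prop :=
  ∀ φ : X3 → ℝ, ContDiff ℝ (⊤ : ℕ∞) φ → HasCompactSupport φ →
    (∫ x, ⟪v x, grad φ x⟫_ℝ) = 0

/-- `g` is the `i`-th weak partial derivative of the vector field `f`. -/
def IsWeakPartial (f : X3 → X3) (i : Fin 3) (g : X3 → X3) : Prop :=
  ∀ φ : X3 → ℝ, ContDiff ℝ (⊤ : ℕ∞) φ → HasCompactSupport φ →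
    (∫ x, pd φ i x • f x) = - ∫ x, φ x • g x

/-- `G` is the weak gradient of the scalar function `g`. -/
def IsWeakGrad (g : X3 → ℝ) (G : X3 → X3) : Prop :=
  ∀ i : Fin 3, ∀ φ : X3 → ℝ, ContDiff ℝ (⊤ : ℕ∞) φ → HasCompactSupport φ →
    (∫ x, g x * pd φ i x) = - ∫ x, G x i * φ x

/-- Membership in the Sobolev space `H¹(ℝ³)` (for classically differentiable functions). -/
def MemH1 (f : X3 → X3) : Prop :=
  MemLp f 2 volume ∧ ∀ i : Fin 3, MemLp (pd f i) 2 volume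

/-- Membership in the Sobolev space `H²(ℝ³)`. -/
def MemH2 (f : X3 → X3) : Prop :=
  MemH1 f ∧ ∀ i j : Fin 3, MemLp (pd (pd f i) j) 2 volume

/-- Membership in the Sobolev space `W^{1,4}(ℝ³)`. -/
def MemW14 (f : X3 → X3) : Prop :=
  MemLp f 4 volume ∧ ∀ i : Fin 3, MemLp (pd f i) 4 volume

/-- The `H¹` distance of two vector fields. -/
def dH1 (f g : X3 → X3) : ℝ≥0∞ :=
  eLpNorm (fun x => f x - g x) 2 volume +
    ∑ i : Fin 3, eLpNorm (fun x => pd f i x - pd g i x) 2 volume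

/-- The `H²` distance of two vector fields. -/
def dH2 (f g : X3 → X3) : ℝ≥0∞ :=
  dH1 f g + ∑ i : Fin 3, ∑ j : Fin 3,
    eLpNorm (fun x => pd (pd f i) j x - pd (pd g i) j x) 2 volume

/-- The `L⁴` distance of two vector fields. -/
def dL4 (f g : X3 → X3) : ℝ≥0∞ := eLpNorm (fun x => f x - g x) 4 volume

/-- The `W^{1,4}` distance of two vector fields. -/
def dW14 (f g : X3 → X3) : ℝ≥0∞ :=
  dL4 f g + ∑ i : Fin 3, eLpNorm (fun x => pd f i x - pd g i x) 4 volume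

/-- Continuity of a curve `t ↦ u t` on a time set `s` with respect to a distance `d`. -/
def ContIn (d : (X3 → X3) → (X3 → X3) → ℝ≥0∞) (u : ℝ → X3 → X3) (s : Set ℝ) : Prop :=
  ∀ t₀ ∈ s, ∀ ε : ℝ, 0 < ε → ∃ δ > 0, ∀ t ∈ s, |t - t₀| < δ →
    d (u t) (u t₀) < ENNReal.ofReal ε

/-- `(u, ω, P)` is a classical (smooth) solution of the micropolar fluid equations
on the time set `S`:
`∂ₜu = (μ+χ)Δu - (u·∇)u - ∇P + χ∇×ω`,
`∂ₜω = γΔω + κ∇(div ω) - 2χω - (u·∇)ω + χ∇×u`, `div u = 0`. -/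
structure SolvesOn (mu chi ga ka : ℝ) (u ω : ℝ → X3 → X3) (P : ℝ → X3 → ℝ)
    (S : Set ℝ) : Prop where
  smooth_u : ContDiffOn ℝ (⊤ : ℕ∞) (fun q : ℝ × X3 => u q.1 q.2) (S ×ˢ (univ : Set X3))
  smooth_ω : ContDiffOn ℝ (⊤ : ℕ∞) (fun q : ℝ × X3 => ω q.1 q.2) (S ×ˢ (univ : Set X3))
  smooth_P : ContDiffOn ℝ (⊤ : ℕ∞) (fun q : ℝ × X3 => P q.1 q.2) (S ×ˢ (univ : Set X3))
  momentum : ∀ t ∈ S, ∀ x : X3,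
    HasDerivWithinAt (fun s => u s x)
      ((mu + chi) • lap (u t) x - conv (u t) (u t) x - grad (P t) x + chi • curl (ω t) x) S t
  angular : ∀ t ∈ S, ∀ x : X3,
    HasDerivWithinAt (fun s => ω s x)
      (ga • lap (ω t) x + ka • grad (divg (ω t)) x - (2 * chi) • ω t x
        - conv (u t) (ω t) x + chi • curl (u t) x) S t
  divfree : ∀ t ∈ S, ∀ x : X3, divg (u t) x = 0

/-- A smooth solution on `[0,T)` in the class
`u ∈ C([0,T); H¹_σ) ∩ C((0,T); H²)`, `ω ∈ C([0,T); H¹) ∩ C((0,T); H²)`. -/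
structure SmoothH1Solution (mu chi ga ka T : ℝ) (u ω : ℝ → X3 → X3) (P : ℝ → X3 → ℝ)
    (u₀ ω₀ : X3 → X3) : Prop where
  pde : SolvesOn mu chi ga ka u ω P (Ioo 0 T)
  init_u : u 0 = u₀
  init_ω : ω 0 = ω₀
  u_memH1 : ∀ t ∈ Ico (0 : ℝ) T, MemH1 (u t)
  u_div : ∀ t ∈ Ico (0 : ℝ) T, DivFreeWeak (u t)
  u_contH1 : ContIn dH1 u (Ico 0 T)
  u_memH2 : ∀ t ∈ Ioo (0 : ℝ) T, MemH2 (u t)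
  u_contH2 : ContIn dH2 u (Ioo 0 T)
  ω_memH1 : ∀ t ∈ Ico (0 : ℝ) T, MemH1 (ω t)
  ω_contH1 : ContIn dH1 ω (Ico 0 T)
  ω_memH2 : ∀ t ∈ Ioo (0 : ℝ) T, MemH2 (ω t)
  ω_contH2 : ContIn dH2 ω (Ioo 0 T)

/-- A smooth solution on `[0,T)` in the class
`u ∈ C([0,T); L⁴_σ) ∩ C((0,T); W^{1,4})`, `ω ∈ C([0,T); L⁴) ∩ C((0,T); W^{1,4})`. -/
structure SmoothL4Solution (mu chi ga ka T : ℝ) (u ω : ℝ → X3 → X3) (P : ℝ → X3 → ℝ)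
    (u₀ ω₀ : X3 → X3) : Prop where
  pde : SolvesOn mu chi ga ka u ω P (Ioo 0 T)
  init_u : u 0 = u₀
  init_ω : ω 0 = ω₀
  u_memL4 : ∀ t ∈ Ico (0 : ℝ) T, MemLp (u t) 4 volume
  u_div : ∀ t ∈ Ico (0 : ℝ) T, DivFreeWeak (u t)
  u_contL4 : ContIn dL4 u (Ico 0 T)
  u_memW14 : ∀ t ∈ Ioo (0 : ℝ) T, MemW14 (u t)
  u_contW14 : ContIn dW14 u (Ioo 0 T)
  ω_memL4 : ∀ t ∈ Ico (0 : ℝ) T, MemLp (ω t) 4 volume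
  ω_contL4 : ContIn dL4 ω (Ico 0 T)
  ω_memW14 : ∀ t ∈ Ioo (0 : ℝ) T, MemW14 (ω t)
  ω_contW14 : ContIn dW14 ω (Ioo 0 T)

section Lorentz

variable {α : Type*} [MeasurableSpace α] {E : Type*} [NormedAddCommGroup E]

/-- The distribution function `f_*(σ) = μ{x : |f(x)| > σ}`. -/
def distFn (μ : Measure α) (f : α → E) (σ : ℝ) : ℝ≥0∞ := μ {x | σ < ‖f x‖}

/-- The non-increasing rearrangement `f*(t) = inf {s > 0 : f_*(s) ≤ t}`. -/
def rearr (μ : Measure α) (f : α → E) (t : ℝ) : ℝ≥0∞ :=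
  ⨅ (s : ℝ) (_ : 0 < s ∧ distFn μ f s ≤ ENNReal.ofReal t), ENNReal.ofReal s

-- The Lorentz `L^{p,q}` (quasi-)norm, `1 ≤ p < ∞`, `1 ≤ q ≤ ∞`.
open Classical in
def lorentzNorm (μ : Measure α) (f : α → E) (p : ℝ) (q : ℝ≥0∞) : ℝ≥0∞ :=
  if q = ∞ then ⨆ (t : ℝ) (_ : 0 < t), (ENNReal.ofReal t) ^ (1 / p) * rearr μ f t
  else (ENNReal.ofReal (q.toReal / p) *
    ∫⁻ t in Ioi (0 : ℝ),
      ((ENNReal.ofReal t) ^ (1 / p) * rearr μ f t) ^ q.toReal / ENNReal.ofReal t) ^ (1 / q.toReal)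

/-- The weak-`L^p` norm `sup_{α>0} α · μ{|f| > α}^{1/p}`, `1 ≤ p < ∞`. -/
def weakNorm (μ : Measure α) (f : α → E) (p : ℝ) : ℝ≥0∞ :=
  ⨆ (a : ℝ) (_ : 0 < a), ENNReal.ofReal a * (distFn μ f a) ^ (1 / p)

-- The weak-`L^p` norm for `p ∈ [1,∞]`, with `L^{∞,∞} = L^∞`.
open Classical in
def weakNormE (μ : Measure α) (f : α → E) (p : ℝ≥0∞) : ℝ≥0∞ :=
  if p = ∞ then eLpNorm f ∞ μ else weakNorm μ f p.toReal

end Lorentz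

/-- `F ∈ L^q(0,T)` for `q ∈ [1,∞]` (`F` an extended-real-valued norm function). -/
def MemTimeLq (F : ℝ → ℝ≥0∞) (T : ℝ) (q : ℝ≥0∞) : Prop :=
  (q = ∞ → essSup F (volume.restrict (Ioo 0 T)) < ∞) ∧
  (q ≠ ∞ → ∫⁻ t in Ioo (0 : ℝ) T, (F t) ^ q.toReal < ∞)

/-- A space-compactly-supported smooth test field on `[0,T]` vanishing at `t = T`,
divergence free. -/
structure TestFieldV (T : ℝ) (φ : ℝ → X3 → X3) : Prop where
  smooth : ContDiff ℝ (⊤ : ℕ∞) (fun q : ℝ × X3 => φ q.1 q.2)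
  supp : ∃ K : Set X3, IsCompact K ∧ ∀ t x, x ∉ K → φ t x = 0
  divfree : ∀ t x, divg (φ t) x = 0
  final : ∀ x, φ T x = 0

/-- A space-compactly-supported smooth test field on `[0,T]` vanishing at `t = T`. -/
structure TestField (T : ℝ) (ψ : ℝ → X3 → X3) : Prop where
  smooth : ContDiff ℝ (⊤ : ℕ∞) (fun q : ℝ × X3 => ψ q.1 q.2)
  supp : ∃ K : Set X3, IsCompact K ∧ ∀ t x, x ∉ K → ψ t x = 0
  final : ∀ x, ψ T x = 0

/-- A (Leray–Hopf type) weak solution of the micropolar fluid equations on `[0,T)`,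
with weak spatial derivative fields `du`, `dω`. -/
structure WeakSolution (mu chi ga ka T : ℝ) (u ω : ℝ → X3 → X3)
    (du dω : ℝ → Fin 3 → X3 → X3) (u₀ ω₀ : X3 → X3) : Prop where
  u_linfty : essSup (fun t => eLpNorm (u t) 2 volume) (volume.restrict (Ioo 0 T)) < ∞
  ω_linfty : essSup (fun t => eLpNorm (ω t) 2 volume) (volume.restrict (Ioo 0 T)) < ∞
  u_mem : ∀ᵐ t ∂(volume.restrict (Ioo 0 T)),
    MemLp (u t) 2 volume ∧ DivFreeWeak (u t) ∧
      ∀ i, MemLp (du t i) 2 volume ∧ IsWeakPartial (u t) i (du t i)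
  ω_mem : ∀ᵐ t ∂(volume.restrict (Ioo 0 T)),
    MemLp (ω t) 2 volume ∧ ∀ i, MemLp (dω t i) 2 volume ∧ IsWeakPartial (ω t) i (dω t i)
  u_l2h1 : ∫⁻ t in Ioo (0 : ℝ) T, ∑ i : Fin 3, (eLpNorm (du t i) 2 volume) ^ 2 < ∞
  ω_l2h1 : ∫⁻ t in Ioo (0 : ℝ) T, ∑ i : Fin 3, (eLpNorm (dω t i) 2 volume) ^ 2 < ∞
  weak_u : ∀ φ : ℝ → X3 → X3, TestFieldV T φ →
    (∫ t in (0 : ℝ)..T,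
      ((- ∫ x, ⟪u t x, deriv (fun s => φ s x) t⟫_ℝ)
        + ((mu + chi) * ∑ i : Fin 3, ∫ x, ⟪du t i x, pd (φ t) i x⟫_ℝ)
        - (∫ x, ⟪conv (u t) (φ t) x, u t x⟫_ℝ)
        + (chi * ∫ x, ⟪curl (φ t) x, ω t x⟫_ℝ)))
      = ∫ x, ⟪u₀ x, φ 0 x⟫_ℝ
  weak_ω : ∀ ψ : ℝ → X3 → X3, TestField T ψ →
    (∫ t in (0 : ℝ)..T,
      ((- ∫ x, ⟪ω t x, deriv (fun s => ψ s x) t⟫_ℝ)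
        + (ga * ∑ i : Fin 3, ∫ x, ⟪dω t i x, pd (ψ t) i x⟫_ℝ)
        + (ka * ∫ x, (∑ i : Fin 3, dω t i x i) * divg (ψ t) x)
        + (2 * chi * ∫ x, ⟪ω t x, ψ t x⟫_ℝ)
        - (∫ x, ⟪conv (u t) (ψ t) x, ω t x⟫_ℝ)
        + (chi * ∫ x, ⟪curl (ψ t) x, u t x⟫_ℝ)))
      = ∫ x, ⟪ω₀ x, ψ 0 x⟫_ℝ

/-- The energy inequality for a weak solution of the micropolar fluid equations. -/
def EnergyIneq (mu chi ga ka T : ℝ) (u ω : ℝ → X3 → X3)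
    (du dω : ℝ → Fin 3 → X3 → X3) (u₀ ω₀ : X3 → X3) : Prop :=
  ∀ t : ℝ, 0 < t → t ≤ T →
    (∫ x, ‖u t x‖ ^ 2) + (∫ x, ‖ω t x‖ ^ 2)
      + 2 * mu * (∫ s in (0 : ℝ)..t, ∑ i : Fin 3, ∫ x, ‖du s i x‖ ^ 2)
      + 2 * ga * (∫ s in (0 : ℝ)..t, ∑ i : Fin 3, ∫ x, ‖dω s i x‖ ^ 2)
      + 2 * ka * (∫ s in (0 : ℝ)..t, ∫ x, (∑ i : Fin 3, dω s i x i) ^ 2)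
      + 2 * chi * (∫ s in (0 : ℝ)..t, ∫ x, ‖ω s x‖ ^ 2)
      ≤ (∫ x, ‖u₀ x‖ ^ 2) + ∫ x, ‖ω₀ x‖ ^ 2

/-- `P` is the pressure associated with the velocity `u`,
i.e. `ΔP = -∑ᵢⱼ ∂ᵢ∂ⱼ(uᵢuⱼ)` in the sense of distributions
(equivalently `P = ∑ᵢⱼ RᵢRⱼuᵢuⱼ`). -/
def IsPressureOf (P : X3 → ℝ) (u : X3 → X3) : Prop :=
  ∀ φ : X3 → ℝ, ContDiff ℝ (⊤ : ℕ∞) φ → HasCompactSupport φ →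
    (∫ x, P x * lap φ x) =
      - ∑ i : Fin 3, ∑ j : Fin 3, ∫ x, u x i * u x j * pd (fun y => pd φ i y) j x

/-- `(u, ω)` coincides a.e. on the time set `S` with a classical smooth solution. -/
def RegularOn (mu chi ga ka : ℝ) (S : Set ℝ) (u ω : ℝ → X3 → X3) : Prop :=
  ∃ u' ω' : ℝ → X3 → X3, ∃ P' : ℝ → X3 → ℝ,
    SolvesOn mu chi ga ka u' ω' P' S ∧
      ∀ t ∈ S, (∀ᵐ x : X3 ∂volume, u' t x = u t x) ∧ ∀ᵐ x : X3 ∂volume, ω' t x = ω t x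

/-! Chebyshev's inequality bounds the rearrangement by `f*(t) ≤ ‖f‖_q t^{-1/q}` for every `q`.
Splitting the integral that defines `‖f‖_{r,s}^s` at the point where the `L^{q₁}` and the `L^{q₀}`
bounds cross gives `‖f‖_{r,s} ≲ ‖f‖_{q₀}^{1-θ} ‖f‖_{q₁}^θ` whenever `1/r = (1-θ)/q₀ + θ/q₁`.
For `q₀ = 4`, `q₁ = 12`, `θ = 3/(2p)` the `L¹²` factor is controlled by the
Gagliardo–Nirenberg–Sobolev inequality applied to `|u|²`:
`‖u‖₁₂² = ‖|u|²‖₆ ≲ ‖∇|u|²‖₂ = 2 ‖|u| ∇|u|‖₂`. -/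

open scoped NNReal

section PowerIntegrals

lemma lintegral_Ioc_ofReal_rpow {c T : ℝ} (hc : -1 < c) (hT : 0 ≤ T) :
    ∫⁻ t in Ioc 0 T, ENNReal.ofReal t ^ c = ENNReal.ofReal (T ^ (c + 1) / (c + 1)) := by
  rw [setLIntegral_congr_fun measurableSet_Ioc fun t ht => ENNReal.ofReal_rpow_of_pos ht.1,
    ← ofReal_integral_eq_lintegral_ofReal
      ((intervalIntegrable_iff_integrableOn_Ioc_of_le hT).1
        (intervalIntegral.intervalIntegrable_rpow' hc))
      ((ae_restrict_iff' measurableSet_Ioc).2 (.of_forall fun t ht => Real.rpow_nonneg ht.1.le c)),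
    ← intervalIntegral.integral_of_le hT, integral_rpow (.inl hc),
    Real.zero_rpow (by linarith), sub_zero]

lemma lintegral_Ioi_ofReal_rpow {c T : ℝ} (hc : c < -1) (hT : 0 < T) :
    ∫⁻ t in Ioi T, ENNReal.ofReal t ^ c = ENNReal.ofReal (-T ^ (c + 1) / (c + 1)) := by
  rw [setLIntegral_congr_fun measurableSet_Ioi
      fun t ht => ENNReal.ofReal_rpow_of_pos (hT.trans ht),
    ← ofReal_integral_eq_lintegral_ofReal (integrableOn_Ioi_rpow_of_lt hc hT)
      ((ae_restrict_iff' measurableSet_Ioi).2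
        (.of_forall fun t ht => Real.rpow_nonneg (hT.trans ht).le c)),
    integral_Ioi_rpow_of_lt hc hT]

lemma rpow_mul_div_rpow_eq {a b : ℝ} (ha : 0 ≤ a) (hb : 0 < b) (s x : ℝ) :
    b ^ s * (a / b) ^ x = a ^ x * b ^ (s - x) := by
  rw [Real.div_rpow ha hb.le, Real.rpow_sub hb]
  ring

-- `(a / b) ^ δ⁻¹`, with `δ = 1/q₀ - 1/q₁`, is where the bounds `b t^(-1/q₁)` and `a t^(-1/q₀)`
-- on `f*` cross; splitting the Lorentz integral there balances its two pieces.
lemma mul_rpow_div_add_mul_rpow_div_eq {a b s δ θ : ℝ} (ha : 0 < a) (hb : 0 < b) (hs : s ≠ 0)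
    (hδ : δ ≠ 0) (hθ₀ : θ ≠ 0) (hθ₁ : 1 - θ ≠ 0) :
    b ^ s * ((a / b) ^ δ⁻¹) ^ (s * ((1 - θ) * δ)) / (s * ((1 - θ) * δ)) +
        a ^ s * ((a / b) ^ δ⁻¹) ^ (s * -(θ * δ)) / (s * (θ * δ)) =
      (s * δ * θ * (1 - θ))⁻¹ * (a ^ (s * (1 - θ)) * b ^ (s * θ)) := by
  have hb' : b ^ s * ((a / b) ^ δ⁻¹) ^ (s * ((1 - θ) * δ)) = a ^ (s * (1 - θ)) * b ^ (s * θ) := by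
    rw [← Real.rpow_mul (by positivity), rpow_mul_div_rpow_eq ha.le hb,
      show δ⁻¹ * (s * ((1 - θ) * δ)) = s * (1 - θ) by field_simp,
      show s - s * (1 - θ) = s * θ by ring]
  have ha' : a ^ s * ((a / b) ^ δ⁻¹) ^ (s * -(θ * δ)) = a ^ (s * (1 - θ)) * b ^ (s * θ) := by
    rw [← Real.rpow_mul (by positivity), ← inv_div, Real.inv_rpow (by positivity),
      ← Real.rpow_neg (by positivity), rpow_mul_div_rpow_eq hb.le ha,
      show -(δ⁻¹ * (s * -(θ * δ))) = s * θ by field_simp,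
      show s - s * θ = s * (1 - θ) by ring, mul_comm]
  rw [hb', ha']
  field_simp
  ring

variable {g : ℝ → ℝ≥0∞} {A B : ℝ≥0∞} {a b s T : ℝ}

lemma rpow_mul_rpow_div_le {t : ℝ} (ht : 0 < t) (hs : 0 ≤ s) {x : ℝ≥0∞}
    (hx : x ≤ B * ENNReal.ofReal t ^ (-b)) :
    (ENNReal.ofReal t ^ a * x) ^ s / ENNReal.ofReal t
      ≤ B ^ s * ENNReal.ofReal t ^ (s * (a - b) - 1) := by
  have ht₀ : ENNReal.ofReal t ≠ 0 := by simpa using ht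
  calc (ENNReal.ofReal t ^ a * x) ^ s / ENNReal.ofReal t
      ≤ (ENNReal.ofReal t ^ a * (B * ENNReal.ofReal t ^ (-b))) ^ s / ENNReal.ofReal t := by
        gcongr
    _ = B ^ s * ENNReal.ofReal t ^ (s * (a - b) - 1) := by
        rw [mul_left_comm, ← ENNReal.rpow_add _ _ ht₀ ENNReal.ofReal_ne_top,
          ENNReal.mul_rpow_of_nonneg _ _ hs, ← ENNReal.rpow_mul,
          ENNReal.rpow_sub _ _ ht₀ ENNReal.ofReal_ne_top, ENNReal.rpow_one, mul_div_assoc,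
          ← sub_eq_add_neg, mul_comm (a - b)]

lemma lintegral_Ioc_rpow_mul_rpow_div_le (hs : 0 < s) (hba : b < a) (hT : 0 ≤ T)
    (hg : ∀ t, 0 < t → g t ≤ B * ENNReal.ofReal t ^ (-b)) :
    ∫⁻ t in Ioc 0 T, (ENNReal.ofReal t ^ a * g t) ^ s / ENNReal.ofReal t
      ≤ B ^ s * ENNReal.ofReal (T ^ (s * (a - b)) / (s * (a - b))) := by
  calc ∫⁻ t in Ioc 0 T, (ENNReal.ofReal t ^ a * g t) ^ s / ENNReal.ofReal t
      ≤ ∫⁻ t in Ioc 0 T, B ^ s * ENNReal.ofReal t ^ (s * (a - b) - 1) :=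
        setLIntegral_mono (by fun_prop) fun t ht => rpow_mul_rpow_div_le ht.1 hs.le (hg t ht.1)
    _ = B ^ s * ENNReal.ofReal (T ^ (s * (a - b)) / (s * (a - b))) := by
        rw [lintegral_const_mul _ (by fun_prop), lintegral_Ioc_ofReal_rpow _ hT, sub_add_cancel]
        nlinarith

lemma lintegral_Ioi_rpow_mul_rpow_div_le (hs : 0 < s) (hab : a < b) (hT : 0 < T)
    (hg : ∀ t, 0 < t → g t ≤ A * ENNReal.ofReal t ^ (-b)) :
    ∫⁻ t in Ioi T, (ENNReal.ofReal t ^ a * g t) ^ s / ENNReal.ofReal t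
      ≤ A ^ s * ENNReal.ofReal (T ^ (s * (a - b)) / (s * (b - a))) := by
  calc ∫⁻ t in Ioi T, (ENNReal.ofReal t ^ a * g t) ^ s / ENNReal.ofReal t
      ≤ ∫⁻ t in Ioi T, A ^ s * ENNReal.ofReal t ^ (s * (a - b) - 1) :=
        setLIntegral_mono (by fun_prop) fun t ht =>
          rpow_mul_rpow_div_le (hT.trans ht) hs.le (hg t (hT.trans ht))
    _ = A ^ s * ENNReal.ofReal (T ^ (s * (a - b)) / (s * (b - a))) := by
        rw [lintegral_const_mul _ (by fun_prop), lintegral_Ioi_ofReal_rpow _ hT, sub_add_cancel,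
          neg_div, ← div_neg, neg_mul_eq_mul_neg, neg_sub]
        nlinarith

end PowerIntegrals

section Lorentz

variable {α : Type*} [MeasurableSpace α] {μ : Measure α} {E : Type*} [NormedAddCommGroup E]
  {f : α → E}

lemma rearr_le_ofReal {s t : ℝ} (hs : 0 < s) (h : distFn μ f s ≤ ENNReal.ofReal t) :
    rearr μ f t ≤ ENNReal.ofReal s :=
  iInf₂_le s ⟨hs, h⟩

lemma distFn_le_inv_rpow_mul_eLpNorm_rpow (hf : AEStronglyMeasurable f μ) {q : ℝ≥0}
    (hq : q ≠ 0) {s : ℝ} (hs : 0 < s) :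
    distFn μ f s ≤ (ENNReal.ofReal s)⁻¹ ^ (q : ℝ) * eLpNorm f q μ ^ (q : ℝ) := by
  calc distFn μ f s ≤ μ {x | ENNReal.ofReal s ≤ ‖f x‖ₑ} := by
        refine measure_mono fun x hx => ?_
        rw [mem_ofPred_eq, ← ofReal_norm]
        exact ENNReal.ofReal_le_ofReal (le_of_lt hx)
    _ ≤ _ := by
        simpa using meas_ge_le_mul_pow_eLpNorm_enorm μ (by simpa using hq) ENNReal.coe_ne_top hf
          (by simpa using hs) (by simp)

lemma rearr_le_eLpNorm_mul_rpow (hf : AEStronglyMeasurable f μ) {q : ℝ≥0} (hq : q ≠ 0) {t : ℝ}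
    (ht : 0 < t) :
    rearr μ f t ≤ eLpNorm f q μ * ENNReal.ofReal t ^ (-(q : ℝ)⁻¹) := by
  set A := eLpNorm f q μ
  set R := A * ENNReal.ofReal t ^ (-(q : ℝ)⁻¹)
  have hq' : (0 : ℝ) < q := by positivity
  have ht₀ : ENNReal.ofReal t ≠ 0 := by simpa using ht
  have hRq : R ^ (q : ℝ) * ENNReal.ofReal t = A ^ (q : ℝ) := by
    rw [ENNReal.mul_rpow_of_nonneg _ _ hq'.le, ← ENNReal.rpow_mul, neg_mul,
      inv_mul_cancel₀ hq'.ne', ENNReal.rpow_neg_one, mul_assoc,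
      ENNReal.inv_mul_cancel ht₀ ENNReal.ofReal_ne_top, mul_one]
  refine le_of_forall_gt_imp_ge_of_dense fun y hRy => ?_
  rcases eq_or_ne y ∞ with rfl | hy
  · exact le_top
  have hy₀ : y ≠ 0 := (zero_le.trans_lt hRy).ne'
  rw [← ENNReal.ofReal_toReal hy]
  refine rearr_le_ofReal (ENNReal.toReal_pos hy₀ hy)
    ((distFn_le_inv_rpow_mul_eLpNorm_rpow hf hq (ENNReal.toReal_pos hy₀ hy)).trans ?_)
  rw [ENNReal.ofReal_toReal hy, ← hRq]
  calc y⁻¹ ^ (q : ℝ) * (R ^ (q : ℝ) * ENNReal.ofReal t)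
      ≤ y⁻¹ ^ (q : ℝ) * (y ^ (q : ℝ) * ENNReal.ofReal t) := by gcongr
    _ = ENNReal.ofReal t := by
        rw [← mul_assoc, ← ENNReal.mul_rpow_of_nonneg _ _ hq'.le, ENNReal.inv_mul_cancel hy₀ hy,
          ENNReal.one_rpow, one_mul]

lemma rearr_eq_zero_of_eLpNorm_eq_zero (hf : AEStronglyMeasurable f μ) {q : ℝ≥0} (hq : q ≠ 0)
    (h : eLpNorm f q μ = 0) {t : ℝ} (ht : 0 < t) : rearr μ f t = 0 := by
  simpa [h] using rearr_le_eLpNorm_mul_rpow hf hq ht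

variable {q₀ q₁ : ℝ≥0} {θ r : ℝ}

lemma lintegral_lorentz_le_eLpNorm_rpow_mul_eLpNorm_rpow (hf : AEStronglyMeasurable f μ)
    (hq₀ : 0 < q₀) (hq : q₀ < q₁) (hθ₀ : 0 < θ) (hθ₁ : θ < 1)
    (hr : 1 / r = (1 - θ) / q₀ + θ / q₁) {s : ℝ} (hs : 0 < s) :
    ∫⁻ t in Ioi 0, (ENNReal.ofReal t ^ (1 / r) * rearr μ f t) ^ s / ENNReal.ofReal t ≤
      ENNReal.ofReal (s * ((q₀ : ℝ)⁻¹ - (q₁ : ℝ)⁻¹) * θ * (1 - θ))⁻¹ *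
        eLpNorm f q₀ μ ^ (s * (1 - θ)) * eLpNorm f q₁ μ ^ (s * θ) := by
  set δ : ℝ := (q₀ : ℝ)⁻¹ - (q₁ : ℝ)⁻¹
  have hδ : 0 < δ := sub_pos.2 (inv_strictAnti₀ (by exact_mod_cast hq₀) (by exact_mod_cast hq))
  have hθ' : 0 < 1 - θ := by linarith
  by_cases h0 : eLpNorm f q₀ μ = 0 ∨ eLpNorm f q₁ μ = 0
  · have hzero (t : ℝ) (ht : t ∈ Ioi 0) : rearr μ f t = 0 :=
      h0.elim (rearr_eq_zero_of_eLpNorm_eq_zero hf hq₀.ne' · ht)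
        (rearr_eq_zero_of_eLpNorm_eq_zero hf (hq₀.trans hq).ne' · ht)
    rw [setLIntegral_congr_fun (g := fun _ => 0) measurableSet_Ioi
      fun t ht => by simp [hzero t ht, hs], lintegral_zero]
    exact zero_le
  push Not at h0
  by_cases htop : eLpNorm f q₀ μ = ∞ ∨ eLpNorm f q₁ μ = ∞
  · refine le_top.trans_eq (Eq.symm ?_)
    rcases htop with h | h <;> simp [h, h0, hs, hθ₀, hθ₀.le, hθ₁.le, hθ', hδ]
  push Not at htop
  obtain ⟨a, ha, hAa⟩ : ∃ a : ℝ, 0 < a ∧ eLpNorm f q₀ μ = ENNReal.ofReal a :=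
    ⟨_, ENNReal.toReal_pos h0.1 htop.1, (ENNReal.ofReal_toReal htop.1).symm⟩
  obtain ⟨b, hb, hBb⟩ : ∃ b : ℝ, 0 < b ∧ eLpNorm f q₁ μ = ENNReal.ofReal b :=
    ⟨_, ENNReal.toReal_pos h0.2 htop.2, (ENNReal.ofReal_toReal htop.2).symm⟩
  have h₁ : 1 / r - (q₁ : ℝ)⁻¹ = (1 - θ) * δ := by rw [hr]; ring
  have h₀ : (q₀ : ℝ)⁻¹ - 1 / r = θ * δ := by rw [hr]; ring
  have hT : 0 < (a / b) ^ δ⁻¹ := by positivity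
  rw [← Ioc_union_Ioi_eq_Ioi hT.le, lintegral_union measurableSet_Ioi (Ioc_disjoint_Ioi le_rfl)]
  refine (add_le_add
    (lintegral_Ioc_rpow_mul_rpow_div_le hs (by nlinarith) hT.le
      fun t ht => rearr_le_eLpNorm_mul_rpow hf (hq₀.trans hq).ne' ht)
    (lintegral_Ioi_rpow_mul_rpow_div_le hs (by nlinarith) hT
      fun t ht => rearr_le_eLpNorm_mul_rpow hf hq₀.ne' ht)).trans_eq ?_
  rw [hAa, hBb, h₁, ← neg_sub (q₀ : ℝ)⁻¹, h₀, ENNReal.ofReal_rpow_of_pos ha,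
    ENNReal.ofReal_rpow_of_pos hb, ENNReal.ofReal_rpow_of_pos ha, ENNReal.ofReal_rpow_of_pos hb,
    ← ENNReal.ofReal_mul (by positivity), ← ENNReal.ofReal_mul (by positivity),
    ← ENNReal.ofReal_mul (by positivity), ← ENNReal.ofReal_mul (by positivity),
    ← ENNReal.ofReal_add (by positivity) (by positivity), ← mul_div_assoc, ← mul_div_assoc,
    mul_rpow_div_add_mul_rpow_div_eq ha hb hs.ne' hδ.ne' hθ₀.ne' hθ'.ne']
  ring_nf

theorem lorentzNorm_le_eLpNorm_rpow_mul_eLpNorm_rpow (hf : AEStronglyMeasurable f μ)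
    (hq₀ : 0 < q₀) (hq : q₀ < q₁) (hθ₀ : 0 < θ) (hθ₁ : θ < 1) (hr : 1 / r = (1 - θ) / q₀ + θ / q₁)
    {s : ℝ≥0∞} (hs₀ : s ≠ 0) (hs : s ≠ ∞) :
    lorentzNorm μ f r s ≤
      ENNReal.ofReal ((r * ((q₀ : ℝ)⁻¹ - (q₁ : ℝ)⁻¹) * θ * (1 - θ))⁻¹ ^ s.toReal⁻¹) *
        eLpNorm f q₀ μ ^ (1 - θ) * eLpNorm f q₁ μ ^ θ := by
  have hσ : 0 < s.toReal := ENNReal.toReal_pos hs₀ hs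
  have hr₀ : 0 < r := one_div_pos.1 (hr ▸ by positivity)
  have hδ : 0 < (q₀ : ℝ)⁻¹ - (q₁ : ℝ)⁻¹ :=
    sub_pos.2 (inv_strictAnti₀ (by exact_mod_cast hq₀) (by exact_mod_cast hq))
  have hθ' : 0 < 1 - θ := by linarith
  rw [lorentzNorm, if_neg hs]
  calc _ ≤ (ENNReal.ofReal (s.toReal / r) *
        (ENNReal.ofReal (s.toReal * ((q₀ : ℝ)⁻¹ - (q₁ : ℝ)⁻¹) * θ * (1 - θ))⁻¹ *
          eLpNorm f q₀ μ ^ (s.toReal * (1 - θ)) * eLpNorm f q₁ μ ^ (s.toReal * θ)))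
          ^ (1 / s.toReal) := by
        gcongr
        exact lintegral_lorentz_le_eLpNorm_rpow_mul_eLpNorm_rpow hf hq₀ hq hθ₀ hθ₁ hr hσ
    _ = _ := by
        rw [← mul_assoc, ← mul_assoc, ← ENNReal.ofReal_mul (by positivity),
          ENNReal.mul_rpow_of_nonneg _ _ (by positivity),
          ENNReal.mul_rpow_of_nonneg _ _ (by positivity), ← ENNReal.rpow_mul, ← ENNReal.rpow_mul,
          one_div, ENNReal.ofReal_rpow_of_nonneg (by positivity) (by positivity)]
        congr 3 <;> field_simp

theorem exists_lorentzNorm_sq_le_eLpNorm_four_mul_eLpNorm_twelve {p : ℝ} (hp : 3 / 2 < p) :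
    ∃ K : ℝ, 0 < K ∧ ∀ f : α → E, AEStronglyMeasurable f μ →
      lorentzNorm μ f (4 * p / (p - 1)) 4 ^ (2 : ℝ) ≤ ENNReal.ofReal K *
        eLpNorm f 4 μ ^ ((2 * p - 3) / p) * (eLpNorm f 12 μ ^ (2 : ℝ)) ^ (3 / (2 * p)) := by
  set θ : ℝ := 3 / (2 * p)
  have hθ₀ : 0 < θ := div_pos three_pos (by linarith)
  have hθ₁ : θ < 1 := (div_lt_one (by linarith)).2 (by linarith)
  have hr : 1 / (4 * p / (p - 1)) = (1 - θ) / ((4 : ℝ≥0) : ℝ) + θ / ((12 : ℝ≥0) : ℝ) := by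
    simp only [θ]
    push_cast
    field_simp
    ring
  obtain ⟨k, hk, hL⟩ : ∃ k : ℝ, 0 < k ∧ ∀ f : α → E, AEStronglyMeasurable f μ →
      lorentzNorm μ f (4 * p / (p - 1)) 4 ≤
        ENNReal.ofReal k * eLpNorm f 4 μ ^ (1 - θ) * eLpNorm f 12 μ ^ θ :=
    ⟨_, Real.rpow_pos_of_pos (inv_pos.2 (mul_pos (mul_pos (mul_pos
        (div_pos (by linarith) (by linarith)) (by norm_num)) hθ₀) (by linarith))) _,
      fun f hf => lorentzNorm_le_eLpNorm_rpow_mul_eLpNorm_rpow hf (by norm_num) (by norm_num)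
        hθ₀ hθ₁ hr four_ne_zero (by simp)⟩
  refine ⟨k ^ (2 : ℝ), by positivity, fun f hf => ?_⟩
  calc lorentzNorm μ f (4 * p / (p - 1)) 4 ^ (2 : ℝ)
      ≤ (ENNReal.ofReal k * eLpNorm f 4 μ ^ (1 - θ) * eLpNorm f 12 μ ^ θ) ^ (2 : ℝ) := by
        gcongr
        exact hL f hf
    _ = _ := by
        rw [ENNReal.mul_rpow_of_nonneg _ _ zero_le_two, ENNReal.mul_rpow_of_nonneg _ _ zero_le_two,
          ← ENNReal.rpow_mul, ← ENNReal.rpow_mul, ← ENNReal.rpow_mul, mul_comm θ,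
          ENNReal.ofReal_rpow_of_pos hk, show (1 - θ) * 2 = (2 * p - 3) / p by
            simp only [θ]; field_simp]

end Lorentz

section Sobolev

variable {E : Type*} [NormedAddCommGroup E] [NormedSpace ℝ E]
  {F : Type*} [NormedAddCommGroup F] [InnerProductSpace ℝ F] {u : E → F}

lemma norm_fderiv_norm_sq {x : E} (hu : DifferentiableAt ℝ u x) :
    ‖fderiv ℝ (fun y => ‖u y‖ ^ 2) x‖ = 2 * ‖u x‖ * ‖fderiv ℝ (fun y => ‖u y‖) x‖ := by
  rcases eq_or_ne (u x) 0 with h | h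
  · simp [hu.hasFDerivAt.norm_sq.fderiv, h]
  · rw [((hu.norm ℝ h).hasFDerivAt.pow 2).fderiv, norm_smul]
    simp

variable [MeasurableSpace E] [BorelSpace E] [FiniteDimensional ℝ E] (μ : Measure E)
  [μ.IsAddHaarMeasure]

open Module in
theorem eLpNorm_sq_le_eLpNorm_norm_mul_norm_fderiv_norm (hu : ContDiff ℝ 1 u)
    (h2u : HasCompactSupport u) {p p' : ℝ≥0} (hp : 1 ≤ p) (hn : 0 < finrank ℝ E)
    (hp' : (p' : ℝ)⁻¹ = p⁻¹ - (finrank ℝ E : ℝ)⁻¹) :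
    eLpNorm u (2 * p' : ℝ≥0) μ ^ (2 : ℝ) ≤ 2 * eLpNormLESNormFDerivOfEqInnerConst μ p *
      eLpNorm (fun x => ‖u x‖ * ‖fderiv ℝ (fun y => ‖u y‖) x‖) p μ := by
  have hsob := eLpNorm_le_eLpNorm_fderiv_of_eq_inner μ (hu.norm_sq ℝ)
    (h2u.comp_left (g := fun v : F => ‖v‖ ^ 2) (by simp)) hp hn hp'
  have hL : eLpNorm (fun x => ‖u x‖ ^ 2) p' μ = eLpNorm u (2 * p' : ℝ≥0) μ ^ (2 : ℝ) := by
    have h := eLpNorm_norm_rpow (μ := μ) (p := p') u two_pos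
    simp only [Real.rpow_two] at h
    rw [h, ENNReal.ofReal_ofNat, mul_comm]
    push_cast
    rfl
  have hR : eLpNorm (fderiv ℝ fun x => ‖u x‖ ^ 2) p μ =
      2 * eLpNorm (fun x => ‖u x‖ * ‖fderiv ℝ (fun y => ‖u y‖) x‖) p μ := by
    rw [show (2 : ℝ≥0∞) = ‖(2 : ℝ)‖ₑ by norm_num [Real.enorm_eq_ofReal], ← eLpNorm_const_smul]
    refine eLpNorm_congr_norm_ae (.of_forall fun x => ?_)
    rw [Pi.smul_apply, norm_smul, norm_fderiv_norm_sq (hu.differentiable one_ne_zero x),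
      Real.norm_two, norm_mul, norm_norm, norm_norm, mul_assoc]
  rw [← hL, mul_comm 2, mul_assoc, ← hR]
  exact hsob

end Sobolev

lemma grad_eq_gradient (f : X3 → ℝ) : grad f = gradient f := by
  ext1 x
  rw [← (EuclideanSpace.basisFun (Fin 3) ℝ).sum_repr' (gradient f x), grad]
  refine Finset.sum_congr rfl fun i _ => ?_
  rw [EuclideanSpace.basisFun_apply, gradient, real_inner_comm,
    InnerProductSpace.toDual_symm_apply, pd, e]

lemma norm_grad (f : X3 → ℝ) (x : X3) : ‖grad f x‖ = ‖fderiv ℝ f x‖ := by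
  rw [grad_eq_gradient, gradient, LinearIsometryEquiv.norm_map]

lemma eLpNorm_norm_smul_grad_norm {F : Type*} [NormedAddCommGroup F] (u : X3 → F)
    (p : ℝ≥0∞) (μ : Measure X3) :
    eLpNorm (fun x => ‖u x‖ • grad (fun y => ‖u y‖) x) p μ =
      eLpNorm (fun x => ‖u x‖ * ‖fderiv ℝ (fun y => ‖u y‖) x‖) p μ :=
  eLpNorm_congr_norm_ae (.of_forall fun x => by simp [norm_smul, norm_grad])

lemma eLpNorm_twelve_sq_le_eLpNorm_norm_smul_grad_norm {u : X3 → X3} (hu : ContDiff ℝ 1 u)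
    (hc : HasCompactSupport u) :
    eLpNorm u 12 volume ^ (2 : ℝ) ≤ 2 * eLpNormLESNormFDerivOfEqInnerConst (volume : Measure X3) 2 *
      eLpNorm (fun x => ‖u x‖ • grad (fun y => ‖u y‖) x) 2 volume := by
  have h := eLpNorm_sq_le_eLpNorm_norm_mul_norm_fderiv_norm volume hu hc (p := 2) (p' := 6)
    (by norm_num) (by simp) (by simp; norm_num)
  rwa [show ((2 * 6 : ℝ≥0) : ℝ≥0∞) = 12 by norm_num, NNReal.coe_ofNat, ENNReal.coe_ofNat,
    ← eLpNorm_norm_smul_grad_norm] at h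

/-- **Interpolation inequality (3.18).** For `3/2 < p < ∞` there is `C = C(p)` with
`‖u‖²_{L^{4p/(p-1),4}} ≤ C ‖u‖₄^{(2p-3)/p} ‖ |u| ∇|u| ‖₂^{3/(2p)}` for all
`u ∈ C_c^∞(ℝ³; ℝ³)`. -/
theorem lorentz_interpolation_l4_l12
    (p : ℝ) (hp : 3 / 2 < p) :
    ∃ C : ℝ, 0 < C ∧ ∀ u : X3 → X3,
      ContDiff ℝ (⊤ : ℕ∞) u → HasCompactSupport u →
        (lorentzNorm volume u (4 * p / (p - 1)) 4) ^ (2 : ℝ) ≤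
          ENNReal.ofReal C * (eLpNorm u 4 volume) ^ ((2 * p - 3) / p) *
            (eLpNorm (fun x => ‖u x‖ • grad (fun y => ‖u y‖) x) 2 volume)
              ^ (3 / (2 * p)) := by
  obtain ⟨K, hK, hL⟩ := exists_lorentzNorm_sq_le_eLpNorm_four_mul_eLpNorm_twelve
    (μ := (volume : Measure X3)) (E := X3) hp
  set c : ℝ≥0 := eLpNormLESNormFDerivOfEqInnerConst (volume : Measure X3) 2
  refine ⟨K * (2 * c + 1 : ℝ) ^ (3 / (2 * p)), by positivity, fun u hu hc => ?_⟩
  have hc' : 2 * (c : ℝ≥0∞) ≤ ENNReal.ofReal (2 * c + 1) := by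
    rw [ENNReal.ofReal_add (by positivity) zero_le_one, ENNReal.ofReal_mul zero_le_two]
    simp
  calc _ ≤ _ := hL u hu.continuous.aestronglyMeasurable
    _ ≤ ENNReal.ofReal K * eLpNorm u 4 volume ^ ((2 * p - 3) / p) *
        (ENNReal.ofReal (2 * c + 1) *
          eLpNorm (fun x => ‖u x‖ • grad (fun y => ‖u y‖) x) 2 volume) ^ (3 / (2 * p)) := by
        gcongr
        exact (eLpNorm_twelve_sq_le_eLpNorm_norm_smul_grad_norm (hu.of_le (by simp)) hc).trans
          (by gcongr)
    _ = _ := by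
        rw [ENNReal.mul_rpow_of_nonneg _ _ (by positivity),
          ENNReal.ofReal_rpow_of_pos (by positivity), ENNReal.ofReal_mul hK.le]
        ring

end Micropolar
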